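/- The backward shift map σ on the Hilbert cube [0,1]^ℤ does not have a uniform asymptotic local-product-structure: for every 0 < ε < 1/2, δ ∈ (0, ε/2), and every family (k_r)_{r>0} ⊂ ℕ with k_r → ∞ as r → 0⁺, there exist x, y with d(x,y) < δ and a point z ∈ V^s_ε(x) ∩ V^u_ε(y) such that for some r > 0 with k_r large, d(σ^{k_r}(z), σ^{k_r}(x)) > r. -/

import Mathlib

open Topology Filter Metric

namespace HC

/-- the Hilbert cube `[0,1]^ℤ` -/
abbrev H := ℤ → Set.Icc (0:ℝ) 1

/-- `ℤ`-iterates of the backward shift: `S m x = σ^m x`, `(S m x) i = x (i + m)` -/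
def S : ℤ → H → H := fun m x i => x (i + m)

/-- the metric `d(x,y) = Σ_{i∈ℤ} |x_i − y_i| / 2^{|i|}` -/
noncomputable def D (x y : H) : ℝ :=
  ∑' i : ℤ, |((x i : ℝ)) - ((y i : ℝ))| / 2 ^ i.natAbs

/-- local c-stable set of the shift -/
def Hs (c : ℝ) (x : H) : Set H := {z | ∀ k : ℤ, 0 ≤ k → D (S k z) (S k x) ≤ c}

/-- local c-unstable set of the shift -/
def Hu (c : ℝ) (x : H) : Set H := {z | ∀ k : ℤ, k ≤ 0 → D (S k z) (S k x) ≤ c}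

/-- stable set of the shift -/
def HsA (x : H) : Set H :=
  {z | Tendsto (fun k : ℤ => D (S k z) (S k x)) atTop (𝓝 0)}

/-- unstable set of the shift -/
def HuA (x : H) : Set H :=
  {z | Tendsto (fun k : ℤ => D (S k z) (S k x)) atBot (𝓝 0)}

/-- asymptotic local stable set -/
def HVs (c : ℝ) (x : H) : Set H := HsA x ∩ Hs c x

/-- asymptotic local unstable set -/
def HVu (c : ℝ) (x : H) : Set H := HuA x ∩ Hu c x

/-- `D^s_ε(x) = Π_{i<0}([x_i−ε, x_i+ε] ∩ [0,1]) × Π_{i≥0}{x_i}` -/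
def Ds (ε : ℝ) (x : H) : Set H :=
  {z | (∀ i : ℤ, i < 0 → |((z i : ℝ)) - ((x i : ℝ))| ≤ ε) ∧
       (∀ i : ℤ, 0 ≤ i → z i = x i)}

/-- `D^u_ε(x) = Π_{i<0}{x_i} × Π_{i≥0}([x_i−ε, x_i+ε] ∩ [0,1])` -/
def Du (ε : ℝ) (x : H) : Set H :=
  {z | (∀ i : ℤ, i < 0 → z i = x i) ∧
       (∀ i : ℤ, 0 ≤ i → |((z i : ℝ)) - ((x i : ℝ))| ≤ ε)}

/-- diameter of a set with respect to the metric `D` -/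
noncomputable def diamD (A : Set H) : ℝ := sSup {r | ∃ a ∈ A, ∃ b ∈ A, r = D a b}

end HC

/-!
Take `x = y = 0` and let `z` be the point whose only nonzero coordinate is `ε`, placed at
position `k_r` with `r = ε / 2`. Then `d(σ^m z, σ^m x) = ε / 2^{|k_r - m|}`, which is at most
`ε` and tends to `0` as `m → ±∞`, so `z ∈ V^s_ε(x) ∩ V^u_ε(x)`; but at `m = k_r` the
distance is `ε > r`.
-/

namespace HC

lemma D_self (x : H) : D x x = 0 := by
  simp [D]

lemma S_zero (m : ℤ) : S m 0 = 0 := rfl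

lemma S_single (m n : ℤ) (a : Set.Icc (0:ℝ) 1) : S m (Pi.single n a) = Pi.single (n - m) a := by
  ext i
  simp only [S, Pi.single_apply, eq_sub_iff_add_eq]

lemma D_single_zero (n : ℤ) (a : Set.Icc (0:ℝ) 1) :
    D (Pi.single n a) 0 = a / 2 ^ n.natAbs := by
  rw [D, tsum_eq_single n]
  · simp [abs_of_nonneg a.2.1]
  · intro i hi
    simp [hi]

lemma D_S_single_S_zero (m n : ℤ) (a : Set.Icc (0:ℝ) 1) :
    D (S m (Pi.single n a)) (S m 0) = a / 2 ^ (n - m).natAbs := by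
  rw [S_single, S_zero, D_single_zero]

lemma tendsto_natAbs_const_sub (n : ℤ) :
    Tendsto (fun m : ℤ => (n - m).natAbs) (atBot ⊔ atTop) atTop :=
  tendsto_sup.2
    ⟨tendsto_atBot_atTop.2 fun b => ⟨n - b, fun m hm => by omega⟩,
      tendsto_atTop_atTop.2 fun b => ⟨n + b, fun m hm => by omega⟩⟩

lemma tendsto_div_two_pow (c : ℝ) : Tendsto (fun j : ℕ => c / 2 ^ j) atTop (𝓝 0) := by
  simpa [div_eq_mul_inv, inv_pow] using
    (tendsto_pow_atTop_nhds_zero_of_lt_one (r := (2:ℝ)⁻¹) (by norm_num) (by norm_num)).const_mul c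

lemma tendsto_D_S_single_S_zero (n : ℤ) (a : Set.Icc (0:ℝ) 1) :
    Tendsto (fun m : ℤ => D (S m (Pi.single n a)) (S m 0)) (atBot ⊔ atTop) (𝓝 0) := by
  simp only [D_S_single_S_zero]
  exact (tendsto_div_two_pow a).comp (tendsto_natAbs_const_sub n)

lemma D_S_single_S_zero_le (m n : ℤ) (a : Set.Icc (0:ℝ) 1) :
    D (S m (Pi.single n a)) (S m 0) ≤ a := by
  rw [D_S_single_S_zero]
  exact div_le_self a.2.1 (one_le_pow₀ one_le_two)

lemma single_mem_HVs (n : ℤ) (a : Set.Icc (0:ℝ) 1) : Pi.single n a ∈ HVs a 0 :=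
  ⟨(tendsto_D_S_single_S_zero n a).mono_left le_sup_right,
    fun m _ => D_S_single_S_zero_le m n a⟩

lemma single_mem_HVu (n : ℤ) (a : Set.Icc (0:ℝ) 1) : Pi.single n a ∈ HVu a 0 :=
  ⟨(tendsto_D_S_single_S_zero n a).mono_left le_sup_left,
    fun m _ => D_S_single_S_zero_le m n a⟩

end HC

/-- the backward shift on the Hilbert cube does not have a uniform
asymptotic local-product-structure. -/
theorem stmt_10 :
    ∀ ε : ℝ, 0 < ε → ε < 1/2 →
    ∀ δ : ℝ, 0 < δ → δ < ε/2 →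
    ∀ k : ℝ → ℕ, Tendsto k (𝓝[>] (0:ℝ)) atTop →
    ∃ x y z : HC.H, HC.D x y < δ ∧ z ∈ HC.HVs ε x ∩ HC.HVu ε y ∧
      ∃ r > (0:ℝ), HC.D (HC.S (k r) z) (HC.S (k r) x) > r := by
  intro ε hε hε_lt δ hδ _ k _
  let a : Set.Icc (0:ℝ) 1 := ⟨ε, hε.le, by linarith⟩
  let n : ℤ := k (ε / 2)
  refine ⟨0, 0, (Pi.single n a : HC.H), by rwa [HC.D_self],
    ⟨HC.single_mem_HVs n a, HC.single_mem_HVu n a⟩, ε / 2, by positivity, ?_⟩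
  rw [HC.D_S_single_S_zero, sub_self, Int.natAbs_zero, pow_zero, div_one]
  exact half_lt_self hε
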